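/- arXiv:2006.14875 — 5 statements merged into one kernel-verified Lean document; each statement's English description precedes it below -/
import Mathlib

section
/- Let (X, 𝒜) be a measurable space, π a probability measure on X, τ a kernel assigning to each x ∈ X a probability measure τ(·|x) on (0,∞), with survival function F̄(l|x) = τ((l,∞)|x), conditional mean m(x) = ∫₀^∞ h τ(dh|x), and overall mean E[H] = ∫_X m(x) π(dx) ∈ (0,∞). Let α be the measure on X × [0,∞) with α(dx, dl) = (F̄(l|x)/E[H]) π(dx) dl. Then the marginal of α on X (the pushforward of α under (x,l) ↦ x) equals the length-biased measure with density m(x)/E[H] with respect to π; that is, for every measurable set B ⊆ X, α(B × [0,∞)) = ∫_B (m(x)/E[H]) π(dx). -/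
open MeasureTheory ProbabilityTheory Set
open scoped ENNReal

lemma anytime_aux_meas {X : Type*} [MeasurableSpace X]
    (τ : Kernel X ℝ) [IsMarkovKernel τ] :
    Measurable fun q : X × ℝ => τ q.1 (Ioi q.2) := by
  have ht : MeasurableSet {p : (X × ℝ) × ℝ | p.1.2 < p.2} :=
    measurableSet_lt (measurable_fst.snd) measurable_snd
  have h := ProbabilityTheory.Kernel.measurable_kernel_prodMk_left
    (κ := τ.comap (Prod.fst : X × ℝ → X) measurable_fst) ht
  simp only [Kernel.comap_apply] at h
  exact h
/-- The marginal on `X` of the anytime measure `α(dx, dl) = (F̄(l|x)/E[H]) π(dx) dl`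
is length-biased with respect to the target `π` by expected hold time: for every
measurable `B ⊆ X`, `α(B × [0,∞)) = ∫_B (m(x)/E[H]) π(dx)` where
`m(x) = ∫ h τ(dh|x)` is the conditional mean hold time. -/
theorem anytime_marginal_length_biased
    {X : Type*} [MeasurableSpace X]
    (π : Measure X) [IsProbabilityMeasure π]
    (τ : Kernel X ℝ) [IsMarkovKernel τ]
    (hsupp : ∀ x, τ x (Ioi (0 : ℝ)) = 1)
    (EH : ℝ≥0∞)
    (hEH : EH = ∫⁻ x, (∫⁻ h, ENNReal.ofReal h ∂(τ x)) ∂π)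
    (hEHpos : 0 < EH) (hEHfin : EH < ⊤) :
    ∀ B : Set X, MeasurableSet B →
      ((π.prod (volume.restrict (Ici (0 : ℝ)))).withDensity
          (fun q => τ q.1 (Ioi q.2) / EH)) (B ×ˢ Ici (0 : ℝ))
        = ∫⁻ x in B, (∫⁻ h, ENNReal.ofReal h ∂(τ x)) / EH ∂π := by
  intro B hB
  have hmeas : Measurable fun q : X × ℝ => τ q.1 (Ioi q.2) := anytime_aux_meas τ
  rw [withDensity_apply _ (hB.prod measurableSet_Ici)]
  have hres : (π.prod (volume.restrict (Ici (0 : ℝ)))).restrict (B ×ˢ Ici (0 : ℝ))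
      = (π.restrict B).prod (volume.restrict (Ici (0 : ℝ))) := by
    rw [← Measure.prod_restrict, Measure.restrict_restrict measurableSet_Ici,
      Set.inter_self]
  rw [hres, lintegral_prod _ ((hmeas.div_const EH).aemeasurable)]
  refine lintegral_congr_ae (Filter.Eventually.of_forall fun x => ?_)
  have key : ∫⁻ l in Ici (0 : ℝ), τ x (Ioi l) = ∫⁻ h, ENNReal.ofReal h ∂(τ x) := by
    have h0 : τ x (Ioi (0 : ℝ))ᶜ = 0 := by
      rw [measure_compl measurableSet_Ioi (measure_ne_top _ _), hsupp x,
        measure_univ, tsub_self]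
    have hnn : 0 ≤ᵐ[τ x] (id : ℝ → ℝ) := by
      rw [Filter.EventuallyLE, ae_iff]
      refine measure_mono_null (fun h hh => ?_) h0
      simp only [Pi.zero_apply, id_eq, not_le] at hh
      simp only [Set.mem_compl_iff, Set.mem_Ioi, not_lt]
      exact hh.le
    have lc := lintegral_eq_lintegral_meas_lt (τ x) hnn aemeasurable_id
    simp only [id_eq] at lc
    rw [lc, ← Measure.restrict_congr_set Ioi_ae_eq_Ici]
    exact lintegral_congr fun t => by congr
  simp only [div_eq_mul_inv]
  rw [lintegral_mul_const' _ _ (ENNReal.inv_ne_top.mpr hEHpos.ne')]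
  rw [key]
end

section
/- Let k₁, k₂, θ₁, θ₂ > 0 and p ≥ 0 be real numbers. Let g_{k,θ}(x) = x^{k−1} e^{−x/θ} / (Γ(k) θ^k) denote the Gamma(k, θ) probability density, let π(x) = ½ g_{k₁,θ₁}(x) + ½ g_{k₂,θ₂}(x), let E[H] = (Γ(k₂) Γ(p + k₁) θ₁^p + Γ(k₁) Γ(p + k₂) θ₂^p) / (2 Γ(k₁) Γ(k₂)), and let φ = (1 + (Γ(k₁) Γ(p + k₂) θ₂^p) / (Γ(k₂) Γ(p + k₁) θ₁^p))^{−1}. Then for every x > 0, the length-biased (anytime) density satisfies x^p π(x) / E[H] = φ · g_{k₁+p, θ₁}(x) + (1 − φ) · g_{k₂+p, θ₂}(x); that is, the anytime distribution of the cold chain is the mixture of Gamma(k₁ + p, θ₁) and Gamma(k₂ + p, θ₂) distributions with mixture weights φ and 1 − φ. -/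
open MeasureTheory Set

/-- The Gamma(`k`, `θ`) probability density (shape `k`, scale `θ`). -/
noncomputable def gammaPdf (k θ x : ℝ) : ℝ :=
  x ^ (k - 1) * Real.exp (-x / θ) / (Real.Gamma k * θ ^ k)

/-! Multiplying the Gamma(`k`, `θ`) density by `x ^ p` gives the Gamma(`k + p`, `θ`) density
times the `p`-th moment `Γ(k + p) θ ^ p / Γ(k)` of Gamma(`k`, `θ`). Length-biasing each component
of `π` therefore keeps it a Gamma density, the normalising constant `E[H]` is the average of the
two moments, and each component's new weight is proportional to its moment. -/

noncomputable def gammaMoment (k θ p : ℝ) : ℝ :=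
  Real.Gamma (k + p) * θ ^ p / Real.Gamma k

lemma gammaMoment_pos {k θ p : ℝ} (hk : 0 < k) (hθ : 0 < θ) (hkp : 0 < k + p) :
    0 < gammaMoment k θ p := by
  have := Real.Gamma_pos_of_pos hk
  have := Real.Gamma_pos_of_pos hkp
  unfold gammaMoment
  positivity

lemma rpow_mul_gammaPdf {k θ p x : ℝ} (hx : 0 < x) (hθ : 0 < θ)
    (hkp : Real.Gamma (k + p) ≠ 0) :
    x ^ p * gammaPdf k θ x = gammaMoment k θ p * gammaPdf (k + p) θ x := by
  have hθp : θ ^ p ≠ 0 := (Real.rpow_pos_of_pos hθ p).ne'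
  have hx_exp : x ^ (k + p - 1) = x ^ p * x ^ (k - 1) := by
    rw [← Real.rpow_add hx]; ring_nf
  unfold gammaPdf gammaMoment
  rw [hx_exp, Real.rpow_add hθ]
  field_simp

/-- The anytime (length-biased) density of the cold chain in the Gamma mixture example:
for `x > 0`, `x^p π(x) / E[H] = φ g_{k₁+p,θ₁}(x) + (1-φ) g_{k₂+p,θ₂}(x)`, where
`π = ½ Gamma(k₁,θ₁) + ½ Gamma(k₂,θ₂)`,
`E[H] = (Γ(k₂)Γ(p+k₁)θ₁^p + Γ(k₁)Γ(p+k₂)θ₂^p)/(2Γ(k₁)Γ(k₂))` and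
`φ = (1 + Γ(k₁)Γ(p+k₂)θ₂^p/(Γ(k₂)Γ(p+k₁)θ₁^p))⁻¹`. -/
theorem anytime_gamma_mixture (k₁ k₂ θ₁ θ₂ p : ℝ)
    (hk₁ : 0 < k₁) (hk₂ : 0 < k₂) (hθ₁ : 0 < θ₁) (hθ₂ : 0 < θ₂) (hp : 0 ≤ p)
    (EH φ : ℝ)
    (hEH : EH = (Real.Gamma k₂ * Real.Gamma (p + k₁) * θ₁ ^ p
        + Real.Gamma k₁ * Real.Gamma (p + k₂) * θ₂ ^ p)
        / (2 * Real.Gamma k₁ * Real.Gamma k₂))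
    (hφ : φ = (1 + (Real.Gamma k₁ * Real.Gamma (p + k₂) * θ₂ ^ p)
        / (Real.Gamma k₂ * Real.Gamma (p + k₁) * θ₁ ^ p))⁻¹) :
    ∀ x : ℝ, 0 < x →
      x ^ p * ((1 / 2) * gammaPdf k₁ θ₁ x + (1 / 2) * gammaPdf k₂ θ₂ x) / EH
        = φ * gammaPdf (k₁ + p) θ₁ x + (1 - φ) * gammaPdf (k₂ + p) θ₂ x := by
  intro x hx
  have hm₁ := gammaMoment_pos hk₁ hθ₁ (by linarith : 0 < k₁ + p)
  have hm₂ := gammaMoment_pos hk₂ hθ₂ (by linarith : 0 < k₂ + p)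
  have hΓ₁ := (Real.Gamma_pos_of_pos hk₁).ne'
  have hΓ₂ := (Real.Gamma_pos_of_pos hk₂).ne'
  have hEH' : EH = (gammaMoment k₁ θ₁ p + gammaMoment k₂ θ₂ p) / 2 := by
    rw [hEH, gammaMoment, gammaMoment, add_comm k₁, add_comm k₂]
    field_simp
  have hφ' : φ = gammaMoment k₁ θ₁ p / (gammaMoment k₁ θ₁ p + gammaMoment k₂ θ₂ p) := by
    rw [hφ, gammaMoment, gammaMoment, add_comm k₁, add_comm k₂]
    field_simp
  have hg₁ := rpow_mul_gammaPdf hx hθ₁ (Real.Gamma_pos_of_pos (by linarith : 0 < k₁ + p)).ne'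
  have hg₂ := rpow_mul_gammaPdf hx hθ₂ (Real.Gamma_pos_of_pos (by linarith : 0 < k₂ + p)).ne'
  rw [mul_add, mul_left_comm, mul_left_comm (x ^ p), hg₁, hg₂, hEH', hφ']
  field_simp
  ring
end

section
/- Let k₁, k₂, θ₁, θ₂ > 0 be real numbers with k₁ ≤ k₂ and θ₁ < θ₂, and for p ≥ 0 define φ(p) = (1 + (Γ(k₁) Γ(p + k₂) θ₂^p) / (Γ(k₂) Γ(p + k₁) θ₁^p))^{−1}, where Γ is the Gamma function. Then p ↦ φ(p) is strictly decreasing on [0, ∞); equivalently, the mixture weight 1 − φ(p) of the second component of the anytime distribution is strictly increasing in p. -/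
open Set

/-- Increments of log-Gamma are monotone: for `0 < a ≤ b` and `0 ≤ t`,
`log Γ(b) - log Γ(a) ≤ log Γ(b+t) - log Γ(a+t)`. -/
lemma logGamma_increment_mono {a b t : ℝ} (ha : 0 < a) (hab : a ≤ b) (ht : 0 ≤ t) :
    Real.log (Real.Gamma b) - Real.log (Real.Gamma a)
      ≤ Real.log (Real.Gamma (b + t)) - Real.log (Real.Gamma (a + t)) := by
  rcases eq_or_lt_of_le hab with rfl | hab
  · simp
  rcases eq_or_lt_of_le ht with rfl | ht
  · simp
  have hb : 0 < b := ha.trans hab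
  have hconv := Real.convexOn_log_Gamma
  set f : ℝ → ℝ := Real.log ∘ Real.Gamma with hf
  have hmem : ∀ {x : ℝ}, 0 < x → x ∈ Ioi (0 : ℝ) := fun hx => hx
  -- slope f a b ≤ slope f a (b+t)
  have h1 : (f b - f a) / (b - a) ≤ (f (b + t) - f a) / (b + t - a) :=
    hconv.secant_mono (hmem ha) (hmem hb) (hmem (by linarith))
      (by linarith) (by linarith) (by linarith)
  -- slope f a (b+t) ≤ slope f (a+t) (b+t), by secant_mono at b+t
  have h2 : (f a - f (b + t)) / (a - (b + t)) ≤ (f (a + t) - f (b + t)) / (a + t - (b + t)) :=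
    hconv.secant_mono (hmem (by linarith)) (hmem ha) (hmem (by linarith))
      (by linarith) (by linarith) (by linarith)
  have h2' : (f (b + t) - f a) / (b + t - a) ≤ (f (b + t) - f (a + t)) / (b + t - (a + t)) := by
    have e1 : (f a - f (b + t)) / (a - (b + t)) = (f (b + t) - f a) / (b + t - a) := by
      rw [← neg_div_neg_eq]; ring_nf
    have e2 : (f (a + t) - f (b + t)) / (a + t - (b + t))
        = (f (b + t) - f (a + t)) / (b + t - (a + t)) := by
      rw [← neg_div_neg_eq]; ring_nf
    rw [← e1, ← e2]; exact h2
  have hba : (0 : ℝ) < b - a := by linarith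
  have key : (f b - f a) / (b - a) ≤ (f (b + t) - f (a + t)) / (b - a) := by
    have : b + t - (a + t) = b - a := by ring
    calc (f b - f a) / (b - a) ≤ (f (b + t) - f a) / (b + t - a) := h1
      _ ≤ (f (b + t) - f (a + t)) / (b + t - (a + t)) := h2'
      _ = (f (b + t) - f (a + t)) / (b - a) := by rw [this]
  have := (div_le_div_iff_of_pos_right hba).mp key
  simpa [hf, Function.comp] using this

/-- Ratio form: `Γ(b) * Γ(a+t) ≤ Γ(b+t) * Γ(a)` for `0 < a ≤ b`, `0 ≤ t`. -/
lemma Gamma_ratio_mono {a b t : ℝ} (ha : 0 < a) (hab : a ≤ b) (ht : 0 ≤ t) :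
    Real.Gamma b * Real.Gamma (a + t) ≤ Real.Gamma (b + t) * Real.Gamma a := by
  have hb : 0 < b := ha.trans_le hab
  have hat : 0 < a + t := by linarith
  have hbt : 0 < b + t := by linarith
  have ga := Real.Gamma_pos_of_pos ha
  have gb := Real.Gamma_pos_of_pos hb
  have gat := Real.Gamma_pos_of_pos hat
  have gbt := Real.Gamma_pos_of_pos hbt
  have h := logGamma_increment_mono ha hab ht
  have h' : Real.log (Real.Gamma b * Real.Gamma (a + t))
      ≤ Real.log (Real.Gamma (b + t) * Real.Gamma a) := by
    rw [Real.log_mul gb.ne' gat.ne', Real.log_mul gbt.ne' ga.ne']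
    linarith
  exact (Real.log_le_log_iff (by positivity) (by positivity)).mp h'

/-- The mixture weight `φ(p) = (1 + Γ(k₁)Γ(p+k₂)θ₂^p/(Γ(k₂)Γ(p+k₁)θ₁^p))⁻¹` of the first
component of the anytime distribution in the Gamma mixture example is strictly decreasing
in the computational-complexity degree `p ≥ 0`, whenever `k₁ ≤ k₂` and `θ₁ < θ₂`
(equivalently, the weight `1 - φ(p)` of the second component is strictly increasing). -/
theorem anytime_mixture_weight_strictAntiOn (k₁ k₂ θ₁ θ₂ : ℝ)
    (hk₁ : 0 < k₁) (hk₂ : 0 < k₂) (hθ₁ : 0 < θ₁) (hθ₂ : 0 < θ₂)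
    (hk : k₁ ≤ k₂) (hθ : θ₁ < θ₂) :
    StrictAntiOn (fun p : ℝ =>
      (1 + (Real.Gamma k₁ * Real.Gamma (p + k₂) * θ₂ ^ p)
        / (Real.Gamma k₂ * Real.Gamma (p + k₁) * θ₁ ^ p))⁻¹) (Set.Ici (0 : ℝ)) := by
  have g1 := Real.Gamma_pos_of_pos hk₁
  have g2 := Real.Gamma_pos_of_pos hk₂
  -- the ratio function
  set R : ℝ → ℝ := fun p =>
    (Real.Gamma k₁ * Real.Gamma (p + k₂) * θ₂ ^ p)
      / (Real.Gamma k₂ * Real.Gamma (p + k₁) * θ₁ ^ p) with hR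
  have hRpos : ∀ p : ℝ, 0 ≤ p → 0 < R p := by
    intro p hp
    have h1 := Real.Gamma_pos_of_pos (by linarith : 0 < p + k₁)
    have h2 := Real.Gamma_pos_of_pos (by linarith : 0 < p + k₂)
    have := Real.rpow_pos_of_pos hθ₁ p
    have := Real.rpow_pos_of_pos hθ₂ p
    positivity
  intro x hx y hy hxy
  simp only [Set.mem_Ici] at hx hy
  have hRxy : R x < R y := by
    -- Gamma ratio part
    have hGam : Real.Gamma (x + k₂) * Real.Gamma (y + k₁)
        ≤ Real.Gamma (y + k₂) * Real.Gamma (x + k₁) := by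
      have := Gamma_ratio_mono (a := x + k₁) (b := x + k₂) (t := y - x)
        (by linarith) (by linarith) (by linarith)
      have e1 : x + k₁ + (y - x) = y + k₁ := by ring
      have e2 : x + k₂ + (y - x) = y + k₂ := by ring
      rwa [e1, e2] at this
    -- rpow part
    have hr1 : (1 : ℝ) < θ₂ / θ₁ := (one_lt_div hθ₁).mpr hθ
    have hrp : (θ₂ / θ₁) ^ x < (θ₂ / θ₁) ^ y :=
      (Real.rpow_lt_rpow_left_iff hr1).mpr hxy
    have hxA := Real.Gamma_pos_of_pos (by linarith : 0 < x + k₁)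
    have hxB := Real.Gamma_pos_of_pos (by linarith : 0 < x + k₂)
    have hyA := Real.Gamma_pos_of_pos (by linarith : 0 < y + k₁)
    have hyB := Real.Gamma_pos_of_pos (by linarith : 0 < y + k₂)
    have p1 := Real.rpow_pos_of_pos hθ₁ x
    have p2 := Real.rpow_pos_of_pos hθ₂ x
    have p3 := Real.rpow_pos_of_pos hθ₁ y
    have p4 := Real.rpow_pos_of_pos hθ₂ y
    have hdiv : ∀ p : ℝ, (θ₂ / θ₁) ^ p = θ₂ ^ p / θ₁ ^ p := fun p =>
      Real.div_rpow hθ₂.le hθ₁.le p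
    -- rewrite R p
    have hRform : ∀ p : ℝ, R p =
        (Real.Gamma k₁ / Real.Gamma k₂) * (Real.Gamma (p + k₂) / Real.Gamma (p + k₁))
          * ((θ₂ / θ₁) ^ p) := by
      intro p
      rw [hR, hdiv p]
      field_simp
    rw [hRform x, hRform y]
    have hA : 0 < Real.Gamma k₁ / Real.Gamma k₂ := by positivity
    have hBx : 0 < Real.Gamma (x + k₂) / Real.Gamma (x + k₁) := by positivity
    have hB : Real.Gamma (x + k₂) / Real.Gamma (x + k₁)
        ≤ Real.Gamma (y + k₂) / Real.Gamma (y + k₁) := by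
      rw [div_le_div_iff₀ hxA hyA]
      linarith [hGam]
    have hCx : 0 < (θ₂ / θ₁) ^ x := Real.rpow_pos_of_pos (by positivity) x
    have hCy : 0 < (θ₂ / θ₁) ^ y := Real.rpow_pos_of_pos (by positivity) y
    calc (Real.Gamma k₁ / Real.Gamma k₂) * (Real.Gamma (x + k₂) / Real.Gamma (x + k₁))
          * ((θ₂ / θ₁) ^ x)
        < (Real.Gamma k₁ / Real.Gamma k₂) * (Real.Gamma (x + k₂) / Real.Gamma (x + k₁))
          * ((θ₂ / θ₁) ^ y) := by
          apply mul_lt_mul_of_pos_left hrp (by positivity)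
      _ ≤ (Real.Gamma k₁ / Real.Gamma k₂) * (Real.Gamma (y + k₂) / Real.Gamma (y + k₁))
          * ((θ₂ / θ₁) ^ y) := by
          apply mul_le_mul_of_nonneg_right _ hCy.le
          exact mul_le_mul_of_nonneg_left hB hA.le
  have h1 : (0 : ℝ) < 1 + R x := by linarith [hRpos x hx]
  have h2 : 1 + R x < 1 + R y := by linarith
  exact inv_strictAnti₀ h1 h2
end

section
/- Let (Y, d) be a metric space, y ∈ Y, and 0 < ε ≤ ε'. Let Θ be a set, p : Θ → (0, ∞) a prior density, f : Y × Θ → (0, ∞) a likelihood, and V, V' > 0 constants. Define π̃^ε(θ, x) = p(θ) f(x|θ) 𝟙_{B_ε(y)}(x) / V and π̃^{ε'}(θ, x) = p(θ) f(x|θ) 𝟙_{B_{ε'}(y)}(x) / V', where B_r(y) = {x ∈ Y : d(x, y) ≤ r}. Then the ABC exchange move satisfies detailed balance with respect to the product of the two targets: for all θ, θ' ∈ Θ and x, x' ∈ Y, π̃^ε(θ, x) · π̃^{ε'}(θ', x') · 𝟙_{B_ε(y)}(x') = π̃^ε(θ', x') · π̃^{ε'}(θ, x) · 𝟙_{B_ε(y)}(x).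 -/
open Set

/-- Detailed balance of the ABC exchange move with respect to the product of the two
targets: with `π̃^ε(θ,x) = p(θ) f(x|θ) 𝟙_{B_ε(y)}(x)/V`,
`π̃^{ε'}(θ,x) = p(θ) f(x|θ) 𝟙_{B_{ε'}(y)}(x)/V'` and `0 < ε ≤ ε'`, for all states,
`π̃^ε(θ,x) π̃^{ε'}(θ',x') 𝟙_{B_ε(y)}(x') = π̃^ε(θ',x') π̃^{ε'}(θ,x) 𝟙_{B_ε(y)}(x)`. -/
theorem abc_exchange_detailed_balance
    {Y : Type*} [MetricSpace Y] {Θ : Type*}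
    (y : Y) (ε ε' : ℝ) (hε : 0 < ε) (hεε' : ε ≤ ε')
    (p : Θ → ℝ) (hp : ∀ θ, 0 < p θ)
    (f : Y → Θ → ℝ) (hf : ∀ x θ, 0 < f x θ)
    (V V' : ℝ) (hV : 0 < V) (hV' : 0 < V')
    (πε πε' : Θ → Y → ℝ)
    (hπε : ∀ θ x, πε θ x
      = p θ * f x θ * (Metric.closedBall y ε).indicator (fun _ => (1 : ℝ)) x / V)
    (hπε' : ∀ θ x, πε' θ x
      = p θ * f x θ * (Metric.closedBall y ε').indicator (fun _ => (1 : ℝ)) x / V') :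
    ∀ (θ θ' : Θ) (x x' : Y),
      πε θ x * πε' θ' x' * (Metric.closedBall y ε).indicator (fun _ => (1 : ℝ)) x'
        = πε θ' x' * πε' θ x * (Metric.closedBall y ε).indicator (fun _ => (1 : ℝ)) x := by
  intro θ θ' x x'
  have hsub := Metric.closedBall_subset_closedBall (x := y) hεε'
  simp only [hπε, hπε']
  by_cases hx : x ∈ Metric.closedBall y ε <;>
    by_cases hx' : x' ∈ Metric.closedBall y ε
  · simp [indicator_of_mem, hx, hx', hsub hx, hsub hx']; ring
  · simp [indicator_of_mem, indicator_of_notMem, hx, hx', hsub hx]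
  · simp [indicator_of_mem, indicator_of_notMem, hx, hx', hsub hx']
  · simp [indicator_of_notMem, hx, hx']
end

section
/- Let (Y, d) be a metric space equipped with a σ-finite measure ν_Y, Θ a measurable space with a σ-finite measure ν_Θ, y ∈ Y, and 0 < ε ≤ ε'. Let p : Θ → (0, ∞) and f : Y × Θ → (0, ∞) be measurable, and suppose Z_ε = ∫∫ p(θ) f(x|θ) 𝟙_{B_ε(y)}(x) ν_Θ(dθ) ν_Y(dx) and Z_{ε'} (defined analogously) are finite and strictly positive, where B_r(y) = {x : d(x, y) ≤ r}. Define the ABC posterior densities π^ε(θ, x) = p(θ) f(x|θ) 𝟙_{B_ε(y)}(x) / Z_ε and π^{ε'}(θ', x') = p(θ') f(x'|θ') 𝟙_{B_{ε'}(y)}(x') / Z_{ε'}. Then the ABC exchange kernel, which from state ((θ, x), (θ', x')) moves to ((θ', x'), (θ, x)) if x' ∈ B_ε(y) and otherwise stays, preserves the product π^ε ⊗ π^{ε'}: for every bounded measurable F, ∫ [𝟙_{B_ε(y)}(x') F((θ', x'), (θ, x)) + (1 − 𝟙_{B_ε(y)}(x')) F((θ, x), (θ', x'))] π^ε(θ,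 x) π^{ε'}(θ', x') ν_Θ(dθ) ν_Y(dx) ν_Θ(dθ') ν_Y(dx') = ∫ F((θ, x), (θ', x')) π^ε(θ, x) π^{ε'}(θ', x') ν_Θ(dθ) ν_Y(dx) ν_Θ(dθ') ν_Y(dx'). -/
/-!
Write `w(z) = π^ε(z₁) π^{ε'}(z₂)` and `a(z) = 𝟙_{B_ε(y)}(x')` for the acceptance of the swap.
Since `B_ε(y) ⊆ B_{ε'}(y)`, the product `a · w` is symmetric under exchanging the two states
(detailed balance). Hence the accepted part of the move, `a(z) F(swap z) w(z) = (a F w)(swap z)`,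
has the same integral as `a F w` itself, because the product measure is invariant under
`Prod.swap`; the rejected part contributes `(1 - a) F w`, and the two add up to `F w`.
-/

open MeasureTheory

theorem integral_swap_move_eq_of_detailed_balance {α : Type*} [MeasurableSpace α]
    {μ : Measure α} [SFinite μ] {a w F : α × α → ℝ}
    (hbal : ∀ z, a z * w z = a z.swap * w z.swap)
    (hFw : Integrable (fun z => F z * w z) (μ.prod μ))
    (haFw : Integrable (fun z => a z * F z * w z) (μ.prod μ)) :
    ∫ z, (a z * F z.swap + (1 - a z) * F z) * w z ∂(μ.prod μ) = ∫ z, F z * w z ∂(μ.prod μ) := by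
  set g : α × α → ℝ := fun z => a z * F z * w z
  have hsplit : ∀ z, (a z * F z.swap + (1 - a z) * F z) * w z = g z.swap + (F z * w z - g z) := by
    intro z
    simp only [g]
    linear_combination F z.swap * hbal z
  calc ∫ z, (a z * F z.swap + (1 - a z) * F z) * w z ∂(μ.prod μ)
      = ∫ z, g z.swap ∂(μ.prod μ) + ∫ z, (F z * w z - g z) ∂(μ.prod μ) := by
        rw [integral_congr_ae (.of_forall hsplit)]
        exact integral_add haFw.swap (hFw.sub haFw)
    _ = ∫ z, F z * w z ∂(μ.prod μ) := by
        rw [integral_prod_swap, integral_sub hFw haFw]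
        ring

theorem indicator_one_mul_indicator_one_of_subset {Y : Type*} {s t : Set Y} (hst : s ⊆ t)
    (x : Y) :
    s.indicator (fun _ => (1 : ℝ)) x * t.indicator (fun _ => 1) x
      = s.indicator (fun _ => 1) x := by
  by_cases hx : x ∈ s
  · simp [hx, hst hx]
  · simp [hx]

theorem abc_exchange_detailed_balance_s11 {Θ Y : Type*} {s t : Set Y} (hst : s ⊆ t)
    (g : Θ × Y → ℝ) (Z Z' : ℝ) (q q' : Θ × Y) :
    s.indicator (fun _ => (1 : ℝ)) q'.2
        * (g q * s.indicator (fun _ => 1) q.2 / Z * (g q' * t.indicator (fun _ => 1) q'.2 / Z'))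
      = s.indicator (fun _ => 1) q.2
        * (g q' * s.indicator (fun _ => 1) q'.2 / Z * (g q * t.indicator (fun _ => 1) q.2 / Z')) := by
  linear_combination
    (g q * g q' * s.indicator (fun _ => 1) q.2 / (Z * Z'))
        * indicator_one_mul_indicator_one_of_subset hst q'.2
      - (g q * g q' * s.indicator (fun _ => 1) q'.2 / (Z * Z'))
        * indicator_one_mul_indicator_one_of_subset hst q.2

theorem abc_exchange_kernel_invariance_general
    {Y : Type*} [MetricSpace Y] [MeasurableSpace Y] [OpensMeasurableSpace Y]
    {Θ : Type*} [MeasurableSpace Θ]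
    (νY : Measure Y) [SigmaFinite νY] (νΘ : Measure Θ) [SigmaFinite νΘ]
    (y : Y) (ε ε' : ℝ) (hεε' : ε ≤ ε')
    (p : Θ → ℝ)
    (f : Y × Θ → ℝ)
    (Zε Zε' : ℝ)
    (hZεint : Integrable (fun q : Θ × Y =>
      p q.1 * f (q.2, q.1) * (Metric.closedBall y ε).indicator (fun _ => (1 : ℝ)) q.2)
      (νΘ.prod νY))
    (hZε'int : Integrable (fun q : Θ × Y =>
      p q.1 * f (q.2, q.1) * (Metric.closedBall y ε').indicator (fun _ => (1 : ℝ)) q.2)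
      (νΘ.prod νY))
    (πε πε' : Θ × Y → ℝ)
    (hπε : ∀ q, πε q
      = p q.1 * f (q.2, q.1) * (Metric.closedBall y ε).indicator (fun _ => (1 : ℝ)) q.2 / Zε)
    (hπε' : ∀ q, πε' q
      = p q.1 * f (q.2, q.1) * (Metric.closedBall y ε').indicator (fun _ => (1 : ℝ)) q.2 / Zε')
    (F : (Θ × Y) × (Θ × Y) → ℝ) (hFm : Measurable F) (hFb : ∃ C, ∀ z, |F z| ≤ C) :
    ∫ z : (Θ × Y) × (Θ × Y),
        ((Metric.closedBall y ε).indicator (fun _ => (1 : ℝ)) z.2.2 * F (z.2, z.1)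
          + (1 - (Metric.closedBall y ε).indicator (fun _ => (1 : ℝ)) z.2.2) * F (z.1, z.2))
          * (πε z.1 * πε' z.2) ∂((νΘ.prod νY).prod (νΘ.prod νY))
      = ∫ z : (Θ × Y) × (Θ × Y), F (z.1, z.2) * (πε z.1 * πε' z.2)
          ∂((νΘ.prod νY).prod (νΘ.prod νY)) := by
  obtain ⟨C, hC⟩ := hFb
  set B := Metric.closedBall y ε
  have hw : Integrable (fun z : (Θ × Y) × (Θ × Y) => πε z.1 * πε' z.2)
      ((νΘ.prod νY).prod (νΘ.prod νY)) := by
    simp only [hπε, hπε']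
    exact (hZεint.div_const Zε).mul_prod (hZε'int.div_const Zε')
  have hacc : Measurable fun z : (Θ × Y) × (Θ × Y) => B.indicator (fun _ => (1 : ℝ)) z.2.2 :=
    (measurable_const.indicator measurableSet_closedBall).comp (measurable_snd.comp measurable_snd)
  refine integral_swap_move_eq_of_detailed_balance (fun z => ?_)
    (hw.bdd_mul hFm.aestronglyMeasurable (c := C) (.of_forall hC))
    (hw.bdd_mul (hacc.mul hFm).aestronglyMeasurable (c := C) (.of_forall fun z => ?_))
  · simp only [hπε, hπε']
    exact abc_exchange_detailed_balance_s11 (Metric.closedBall_subset_closedBall hεε')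
      (fun q => p q.1 * f (q.2, q.1)) Zε Zε' z.1 z.2
  · calc ‖B.indicator (fun _ => (1 : ℝ)) z.2.2 * F z‖
        ≤ 1 * ‖F z‖ := by
          rw [norm_mul]
          gcongr
          exact (norm_indicator_le_norm_self _ _).trans_eq norm_one
      _ ≤ C := by simpa using hC z

/-- The ABC exchange kernel — which from state `((θ,x),(θ',x'))` swaps to
`((θ',x'),(θ,x))` iff `x' ∈ B_ε(y)` and otherwise stays — preserves the product
`π^ε ⊗ π^{ε'}` of the two normalized ABC posteriors
`π^ε(θ,x) = p(θ) f(x|θ) 𝟙_{B_ε(y)}(x)/Z_ε` (tolerances `0 < ε ≤ ε'`):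
for every bounded measurable `F`, the integral of the moved state equals the integral
of the current state. -/
theorem abc_exchange_kernel_invariance
    {Y : Type*} [MetricSpace Y] [MeasurableSpace Y] [OpensMeasurableSpace Y]
    {Θ : Type*} [MeasurableSpace Θ]
    (νY : Measure Y) [SigmaFinite νY] (νΘ : Measure Θ) [SigmaFinite νΘ]
    (y : Y) (ε ε' : ℝ) (hε : 0 < ε) (hεε' : ε ≤ ε')
    (p : Θ → ℝ) (hpm : Measurable p) (hp : ∀ θ, 0 < p θ)
    (f : Y × Θ → ℝ) (hfm : Measurable f) (hf : ∀ q, 0 < f q)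
    (Zε Zε' : ℝ) (hZε : 0 < Zε) (hZε' : 0 < Zε')
    (hZεdef : Zε = ∫ q : Θ × Y,
      p q.1 * f (q.2, q.1) * (Metric.closedBall y ε).indicator (fun _ => (1 : ℝ)) q.2
        ∂(νΘ.prod νY))
    (hZε'def : Zε' = ∫ q : Θ × Y,
      p q.1 * f (q.2, q.1) * (Metric.closedBall y ε').indicator (fun _ => (1 : ℝ)) q.2
        ∂(νΘ.prod νY))
    (hZεint : Integrable (fun q : Θ × Y =>
      p q.1 * f (q.2, q.1) * (Metric.closedBall y ε).indicator (fun _ => (1 : ℝ)) q.2)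
      (νΘ.prod νY))
    (hZε'int : Integrable (fun q : Θ × Y =>
      p q.1 * f (q.2, q.1) * (Metric.closedBall y ε').indicator (fun _ => (1 : ℝ)) q.2)
      (νΘ.prod νY))
    (πε πε' : Θ × Y → ℝ)
    (hπε : ∀ q, πε q
      = p q.1 * f (q.2, q.1) * (Metric.closedBall y ε).indicator (fun _ => (1 : ℝ)) q.2 / Zε)
    (hπε' : ∀ q, πε' q
      = p q.1 * f (q.2, q.1) * (Metric.closedBall y ε').indicator (fun _ => (1 : ℝ)) q.2 / Zε')
    (F : (Θ × Y) × (Θ × Y) → ℝ) (hFm : Measurable F) (hFb : ∃ C, ∀ z, |F z| ≤ C) :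
    ∫ z : (Θ × Y) × (Θ × Y),
        ((Metric.closedBall y ε).indicator (fun _ => (1 : ℝ)) z.2.2 * F (z.2, z.1)
          + (1 - (Metric.closedBall y ε).indicator (fun _ => (1 : ℝ)) z.2.2) * F (z.1, z.2))
          * (πε z.1 * πε' z.2) ∂((νΘ.prod νY).prod (νΘ.prod νY))
      = ∫ z : (Θ × Y) × (Θ × Y), F (z.1, z.2) * (πε z.1 * πε' z.2)
          ∂((νΘ.prod νY).prod (νΘ.prod νY)) :=
  abc_exchange_kernel_invariance_general νY νΘ y ε ε' hεε' p f Zε Zε' hZεint hZε'int πε πε' hπε hπε'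
    F hFm hFb
end
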